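/- arXiv:1009.0252 — 3 statements merged into one kernel-verified Lean document; each statement's English description precedes it below -/
import Mathlib

section
/- Let C be a smooth projective curve of genus g over an algebraically closed field k, with function field K = k(C). Then every nonzero element of K is a finite product of elements f_1 · ... · f_r of K, where each f_i has pole divisor of degree at most g + 2 (equivalently, at most g + 2 poles counted with multiplicity). -/
/-- A model of a smooth projective curve of genus `g` over an algebraically closed field `k`,
with function field `K = k(C)`: the data of the set of closed points (places) of the curve
together with the order (normalized valuation) of a function at each place, satisfying the
standard axioms, including finiteness of zeros and poles, degree zero of principal divisors,
and the Riemann(-Roch) inequality `ℓ(D) ≥ deg D + 1 - g`. -/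
structure SmoothProjectiveCurveModel (k : Type*) [Field k] (K : Type*) [Field K]
    [Algebra k K] (g : ℕ) where
  /-- the closed points of the curve -/
  Place : Type*
  /-- the order of vanishing of a function at a place (`⊤` for the zero function);
  a pole of order `n` at `p` corresponds to `ord p f = -n < 0` -/
  ord : Place → K → WithTop ℤ
  ord_eq_top_iff : ∀ p f, ord p f = ⊤ ↔ f = 0
  ord_mul : ∀ p f₁ f₂, ord p (f₁ * f₂) = ord p f₁ + ord p f₂
  ord_add : ∀ p f₁ f₂, min (ord p f₁) (ord p f₂) ≤ ord p (f₁ + f₂)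
  ord_algebraMap : ∀ p (c : k), c ≠ 0 → ord p (algebraMap k K c) = 0
  support_finite : ∀ f : K, f ≠ 0 → {p | ord p f ≠ 0}.Finite
  degree_principal_eq_zero : ∀ f : K, f ≠ 0 → ∑ᶠ p, (ord p f).untopD 0 = 0
  /-- Riemann–Roch inequality: for every divisor `D` the space
  `L(D) = {f : div(f) + D ≥ 0}` has `k`-dimension at least `deg D + 1 - g`. -/
  riemann_inequality : ∀ D : Place →₀ ℤ, ∃ s : Finset K,
    (∀ f ∈ s, ∀ p, ((-(D p) : ℤ) : WithTop ℤ) ≤ ord p f) ∧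
    LinearIndependent k (fun f : s => (f : K)) ∧
    (D.sum fun _ n => n) + 1 - (g : ℤ) ≤ (s.card : ℤ)

/-- The degree of the pole divisor of `f`, i.e. the number of poles of `f`
counted with multiplicity. -/
noncomputable def SmoothProjectiveCurveModel.poleDeg {k : Type*} [Field k] {K : Type*}
    [Field K] [Algebra k K] {g : ℕ} (C : SmoothProjectiveCurveModel k K g) (f : K) : ℤ :=
  ∑ᶠ p, max 0 (-(C.ord p f).untopD 0)

/-!
Let `f` have more than `g + 2` poles. Choose an effective divisor `A` of degree `g + 1` below the
pole divisor of `f` and a zero `b` of `f` (one exists because principal divisors have degree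
zero). Riemann's inequality for `A - b`, of degree `g`, gives `f₁ ≠ 0` with poles bounded by `A`
and a zero at `b`. The zeros of `f / f₁` are then those of `f` with `b` removed once, so
`f / f₁` has fewer zeros, hence fewer poles, than `f`, and we induct on the number of poles.
-/

namespace Finsupp

variable {σ : Type*}

lemma degree_nonneg {R : Type*} [AddCommMonoid R] [PartialOrder R] [IsOrderedAddMonoid R]
    {d : σ →₀ R} (hd : 0 ≤ d) : 0 ≤ degree d :=
  Finset.sum_nonneg fun i _ => hd i

lemma degree_mono_of_addGroup {R : Type*} [AddCommGroup R] [PartialOrder R]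
    [IsOrderedAddMonoid R] : Monotone (degree : (σ →₀ R) → R) := fun d e hde => by
  simpa [map_sub] using degree_nonneg (sub_nonneg.2 hde)

lemma exists_le_degree_eq_of_nonneg {P : σ →₀ ℤ} (hP : 0 ≤ P) {m : ℕ}
    (hm : (m : ℤ) ≤ degree P) :
    ∃ A, 0 ≤ A ∧ A ≤ P ∧ degree A = m := by
  classical
  induction m with
  | zero => exact ⟨0, le_rfl, hP, map_zero _⟩
  | succ m ih =>
    obtain ⟨A, hA0, hAP, hAdeg⟩ := ih (by omega)
    obtain ⟨p, hp⟩ : ∃ p, A p < P p := by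
      by_contra! h
      obtain rfl : A = P := le_antisymm hAP h
      omega
    refine ⟨A + single p 1, add_nonneg hA0 (single_nonneg.2 zero_le_one), fun q => ?_, ?_⟩
    · rw [add_apply, single_apply]
      split_ifs with h
      · subst h; omega
      · simpa using hAP q
    · rw [map_add, degree_single, hAdeg]
      push_cast; rfl

end Finsupp

namespace SmoothProjectiveCurveModel

open Finsupp

variable {k : Type*} [Field k] {K : Type*} [Field K] [Algebra k K] {g : ℕ}
  (C : SmoothProjectiveCurveModel k K g)

lemma support_untopD_ord_finite (f : K) :
    (Function.support fun p => (C.ord p f).untopD 0).Finite := by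
  by_cases hf : f = 0
  · simp [hf, (C.ord_eq_top_iff _ _).2]
  · exact (C.support_finite f hf).subset fun p hp h => hp (by simp [h])

-- Since `ord p 0 = ⊤` untops to `0`, the junk value `divisor 0` is `0`.
noncomputable def divisor (f : K) : C.Place →₀ ℤ :=
  Finsupp.ofSupportFinite _ (C.support_untopD_ord_finite f)

lemma divisor_apply (f : K) (p : C.Place) : C.divisor f p = (C.ord p f).untopD 0 := rfl

lemma ord_eq_divisor {f : K} (hf : f ≠ 0) (p : C.Place) : C.ord p f = C.divisor f p := by
  have h : C.ord p f ≠ ⊤ := (C.ord_eq_top_iff p f).not.2 hf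
  obtain ⟨n, hn⟩ := WithTop.ne_top_iff_exists.1 h
  rw [divisor_apply, ← hn]
  rfl

lemma divisor_mul {f₁ f₂ : K} (hf₁ : f₁ ≠ 0) (hf₂ : f₂ ≠ 0) :
    C.divisor (f₁ * f₂) = C.divisor f₁ + C.divisor f₂ := by
  ext p
  have h := C.ord_mul p f₁ f₂
  rw [C.ord_eq_divisor hf₁, C.ord_eq_divisor hf₂,
    C.ord_eq_divisor (mul_ne_zero hf₁ hf₂)] at h
  exact_mod_cast h

lemma divisor_div {f₁ f₂ : K} (hf₁ : f₁ ≠ 0) (hf₂ : f₂ ≠ 0) :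
    C.divisor (f₁ / f₂) = C.divisor f₁ - C.divisor f₂ := by
  rw [eq_sub_iff_add_eq, ← C.divisor_mul (div_ne_zero hf₁ hf₂) hf₂, div_mul_cancel₀ _ hf₂]

lemma degree_divisor {f : K} (hf : f ≠ 0) : degree (C.divisor f) = 0 := by
  rw [← C.degree_principal_eq_zero f hf, degree_apply,
    finsum_eq_sum_of_support_subset (fun p => (C.ord p f).untopD 0)
    (s := (C.divisor f).support) fun p hp => mem_support_iff.2 hp]
  rfl

lemma poleDeg_eq_degree_negPart (f : K) : C.poleDeg f = degree (C.divisor f)⁻ := by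
  have h : (fun p => max 0 (-(C.ord p f).untopD 0)) = ⇑(C.divisor f)⁻ := by
    ext p
    exact max_comm _ _
  rw [poleDeg, h, degree_apply,
    finsum_eq_sum_of_support_subset _ fun p hp => mem_support_iff.2 hp]

lemma poleDeg_eq_degree_posPart {f : K} (hf : f ≠ 0) :
    C.poleDeg f = degree (C.divisor f)⁺ := by
  have h := congrArg degree (posPart_sub_negPart (C.divisor f))
  rw [map_sub, C.degree_divisor hf] at h
  rw [C.poleDeg_eq_degree_negPart]
  omega

lemma exists_divisor_add_nonneg {D : C.Place →₀ ℤ} (hD : (g : ℤ) ≤ degree D) :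
    ∃ f ≠ 0, 0 ≤ C.divisor f + D := by
  obtain ⟨s, hs, hli, hcard⟩ := C.riemann_inequality D
  obtain ⟨f, hfs⟩ : s.Nonempty :=
    Finset.card_pos.1 (by change degree D + 1 - g ≤ _ at hcard; omega)
  have hf : f ≠ 0 := hli.ne_zero ⟨f, hfs⟩
  refine ⟨f, hf, fun p => neg_le_iff_add_nonneg.1 ?_⟩
  have h := hs f hfs p
  rw [C.ord_eq_divisor hf] at h
  exact_mod_cast h

lemma exists_divisor_pos_of_poleDeg_pos {f : K} (hf : f ≠ 0) (h : 0 < C.poleDeg f) :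
    ∃ b, 0 < C.divisor f b := by
  by_contra! hle
  rw [C.poleDeg_eq_degree_posPart hf, posPart_eq_zero.2 hle, map_zero] at h
  exact h.false

lemma exists_poleDeg_le_and_poleDeg_div_lt {f : K} (hf : f ≠ 0)
    (hpole : (g : ℤ) + 1 ≤ C.poleDeg f) :
    ∃ f₁ ≠ 0, C.poleDeg f₁ ≤ g + 1 ∧ C.poleDeg (f / f₁) < C.poleDeg f := by
  obtain ⟨b, hb⟩ := C.exists_divisor_pos_of_poleDeg_pos hf (by omega)
  obtain ⟨A, hA0, hAle, hAdeg⟩ := exists_le_degree_eq_of_nonneg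
    (negPart_nonneg (C.divisor f)) (m := g + 1)
    (by rw [← C.poleDeg_eq_degree_negPart]; exact_mod_cast hpole)
  obtain ⟨f₁, hf₁, hf₁A⟩ := C.exists_divisor_add_nonneg (D := A - single b 1)
    (by rw [map_sub, degree_single, hAdeg]; push_cast; omega)
  refine ⟨f₁, hf₁, ?_, ?_⟩
  · have hneg : (C.divisor f₁)⁻ ≤ A :=
      sup_le ((neg_le_iff_add_nonneg'.2 hf₁A).trans (sub_le_self _ (single_nonneg.2 zero_le_one)))
        hA0
    calc C.poleDeg f₁ = degree (C.divisor f₁)⁻ := C.poleDeg_eq_degree_negPart f₁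
      _ ≤ degree A := degree_mono_of_addGroup hneg
      _ = g + 1 := by exact_mod_cast hAdeg
  · have hzeros : (C.divisor (f / f₁))⁺ ≤ (C.divisor f)⁺ - single b 1 := by
      rw [C.divisor_div hf hf₁]
      refine sup_le ?_ fun p => ?_
      · calc C.divisor f - C.divisor f₁ ≤ C.divisor f + A - single b 1 := by
              rw [← sub_nonneg]; convert hf₁A using 1; abel
          _ ≤ C.divisor f + (C.divisor f)⁻ - single b 1 := by gcongr
          _ = (C.divisor f)⁺ - single b 1 := by
              rw [← sub_eq_iff_eq_add.1 (posPart_sub_negPart (C.divisor f))]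
      · classical
        show 0 ≤ max (C.divisor f p) 0 - single b 1 p
        rw [single_apply]
        split_ifs with h
        · subst h; omega
        · omega
    calc C.poleDeg (f / f₁) = degree (C.divisor (f / f₁))⁺ :=
          C.poleDeg_eq_degree_posPart (div_ne_zero hf hf₁)
      _ ≤ degree ((C.divisor f)⁺ - single b 1) := degree_mono_of_addGroup hzeros
      _ < degree (C.divisor f)⁺ := by rw [map_sub, degree_single]; omega
      _ = C.poleDeg f := (C.poleDeg_eq_degree_posPart hf).symm

end SmoothProjectiveCurveModel

theorem product_of_functions_with_few_poles_general {k : Type*} [Field k]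
    {K : Type*} [Field K] [Algebra k K] {g : ℕ} (C : SmoothProjectiveCurveModel k K g)
    (f : K) (hf : f ≠ 0) :
    ∃ (r : ℕ) (fs : Fin r → K), (∀ i, fs i ≠ 0) ∧ f = ∏ i, fs i ∧
      ∀ i, C.poleDeg (fs i) ≤ (g : ℤ) + 2 := by
  induction hn : (C.poleDeg f).toNat using Nat.strong_induction_on generalizing f with
  | _ n ih =>
    by_cases hsmall : C.poleDeg f ≤ g + 2
    · exact ⟨1, fun _ => f, fun _ => hf, by simp, fun _ => hsmall⟩
    obtain ⟨f₁, hf₁, hpole₁, hlt⟩ := C.exists_poleDeg_le_and_poleDeg_div_lt hf (by omega)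
    obtain ⟨r, fs, hne, hprod, hpole⟩ := ih _ (by omega) (f / f₁) (div_ne_zero hf hf₁) rfl
    refine ⟨r + 1, Fin.cons f₁ fs, Fin.forall_fin_succ.2 ⟨hf₁, hne⟩, ?_,
      Fin.forall_fin_succ.2 ⟨by simp only [Fin.cons_zero]; omega, hpole⟩⟩
    rw [Fin.prod_cons, ← hprod, mul_div_cancel₀ _ hf₁]

/-- Every nonzero element of the function field of a smooth projective curve of genus `g`
over an algebraically closed field is a finite product of elements whose pole divisor has
degree at most `g + 2`. -/
theorem product_of_functions_with_few_poles {k : Type*} [Field k] [IsAlgClosed k]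
    {K : Type*} [Field K] [Algebra k K] {g : ℕ} (C : SmoothProjectiveCurveModel k K g)
    (f : K) (hf : f ≠ 0) :
    ∃ (r : ℕ) (fs : Fin r → K), (∀ i, fs i ≠ 0) ∧ f = ∏ i, fs i ∧
      ∀ i, C.poleDeg (fs i) ≤ (g : ℤ) + 2 :=
  product_of_functions_with_few_poles_general C f hf
end

section
/- Let K be a valued field with valuation ring O, and let u be an O-submodule of K^N of the form u = U_0 + O·a_1 + ... + O·a_m for some K-linear subspace U_0 ⊆ u and finitely many a_1,...,a_m ∈ K^N. Then u is a semi-lattice in K^N if and only if for every nonzero v ∈ K^N one has Kv ∩ u ≠ {0}. -/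
/-- An `O`-submodule `u` of `K^N` (for `O` a valuation ring with fraction field `K`)
is a *semi-lattice* if there is a `K`-subspace `U₀ ⊆ u` such that `u/U₀` is a lattice in
`K^N/U₀`, i.e. `u = U₀ + O·a₁ + ⋯ + O·a_m` where the images of the `aᵢ` in `K^N/U₀` are
`K`-linearly independent and, together with `U₀`, span `K^N`. -/
def IsSemiLattice (O : Type*) {K : Type*} [CommRing O] [Field K] [Algebra O K]
    {N : ℕ} (u : Submodule O (Fin N → K)) : Prop :=
  ∃ (U₀ : Submodule K (Fin N → K)) (m : ℕ) (a : Fin m → (Fin N → K)),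
    U₀.restrictScalars O ≤ u ∧
    u = U₀.restrictScalars O ⊔ Submodule.span O (Set.range a) ∧
    LinearIndependent K (fun i => Submodule.Quotient.mk (p := U₀) (a i)) ∧
    Submodule.span K ((U₀ : Set (Fin N → K)) ∪ Set.range a) = ⊤

/-!
Both sides say that `u` spans `K^N` over `K`. For the lines this is clearing denominators:
every element of the `K`-span of `u` is a `K`-multiple of an element of `u`. A semi-lattice
spans because `U₀` and the `aᵢ` lie in it. Conversely, the image of `u` in `K^N / U₀` is a
finitely generated torsion-free module over the Bézout local ring `O`, hence flat, hence
free; lifts of an `O`-basis of it are `K`-independent modulo `U₀` and, together with `U₀`,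
generate `u`.
-/

open Submodule

section

variable {O K V : Type*} [CommRing O] [Field K] [Algebra O K] [AddCommGroup V] [Module K V]
  [Module O V] [IsScalarTower O K V]

theorem Submodule.span_restrictScalars_sup_span (U : Submodule K V) (s : Set V) :
    span K ((U.restrictScalars O ⊔ span O s : Submodule O V) : Set V) = span K (U ∪ s) := by
  rw [← span_eq (U.restrictScalars O), ← span_union, span_span_of_tower, coe_restrictScalars]

theorem Submodule.restrictScalars_sup_span_eq_comap (U : Submodule K V) (s : Set V) :
    U.restrictScalars O ⊔ span O s =
      comap (U.mkQ.restrictScalars O) (span O (U.mkQ '' s)) := by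
  rw [← LinearMap.coe_restrictScalars O, ← map_span, comap_map_eq, sup_comm]
  congr 1
  ext x
  simp

variable [IsDomain O] [IsFractionRing O K]

theorem Submodule.span_eq_top_iff_forall_exists_smul_mem (u : Submodule O V) :
    span K (u : Set V) = ⊤ ↔ ∀ v : V, v ≠ 0 → ∃ c : K, c ≠ 0 ∧ c • v ∈ u := by
  constructor
  · intro h v _
    obtain ⟨y, hy, z, hvy⟩ := (IsLocalization.mem_span_iff (nonZeroDivisors O)).mp
      (h ▸ mem_top : v ∈ span K (u : Set V))
    refine ⟨algebraMap O K z, IsFractionRing.to_map_ne_zero_of_mem_nonZeroDivisors z.2, ?_⟩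
    rw [span_eq] at hy
    rwa [hvy, smul_smul, IsLocalization.mul_mk'_eq_mk'_of_mul, mul_one, IsLocalization.mk'_self,
      one_smul]
  · intro h
    refine eq_top_iff.mpr fun v _ => ?_
    rcases eq_or_ne v 0 with rfl | hv
    · exact zero_mem _
    obtain ⟨c, hc, hcv⟩ := h v hv
    rw [← inv_smul_smul₀ hc v]
    exact smul_mem _ _ (subset_span hcv)

variable [ValuationRing O]

theorem ValuationRing.exists_linearIndependent_span_eq (M : Submodule O V) (hM : M.FG) :
    ∃ (r : ℕ) (b : Fin r → V), LinearIndependent K b ∧ span O (Set.range b) = M := by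
  have : Module.Finite O M := Module.Finite.iff_fg.mpr hM
  have : Module.IsTorsionFree O V := .trans_faithfulSMul O K V
  have : Module.Flat O M := Module.Flat.flat_iff_torsion_eq_bot_of_isBezout.mpr
    (isTorsionFree_iff_torsion_eq_bot.mp inferInstance)
  have : Module.Free O M := Module.free_of_flat_of_isLocalRing
  let B := Module.finBasis O M
  refine ⟨_, M.subtype ∘ B, ?_, ?_⟩
  · exact (LinearIndependent.iff_fractionRing O K).mp (B.linearIndependent.map' _ M.ker_subtype)
  · rw [Set.range_comp, ← map_span, B.span_eq, map_subtype_top]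

theorem Submodule.exists_linearIndependent_mkQ_sup_span_eq (U : Submodule K V) {s : Set V}
    (hs : s.Finite) : ∃ (r : ℕ) (a : Fin r → V), LinearIndependent K (U.mkQ ∘ a) ∧
      U.restrictScalars O ⊔ span O (Set.range a) = U.restrictScalars O ⊔ span O s := by
  obtain ⟨r, b, hb, hspan⟩ := ValuationRing.exists_linearIndependent_span_eq (K := K)
    (span O (U.mkQ '' s)) (fg_span (hs.image _))
  choose a ha using fun i => U.mkQ_surjective (b i)
  have hab : U.mkQ ∘ a = b := funext ha
  refine ⟨r, a, hab ▸ hb, ?_⟩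
  rw [restrictScalars_sup_span_eq_comap, restrictScalars_sup_span_eq_comap, ← Set.range_comp,
    hab, hspan]

end

section

variable {O K : Type*} [CommRing O] [Field K] [Algebra O K] {N : ℕ}

theorem IsSemiLattice.span_eq_top {u : Submodule O (Fin N → K)} (h : IsSemiLattice O u) :
    span K (u : Set (Fin N → K)) = ⊤ := by
  obtain ⟨U, m, a, -, rfl, -, hspan⟩ := h
  rwa [span_restrictScalars_sup_span]

theorem isSemiLattice_of_span_eq_top [IsDomain O] [ValuationRing O] [IsFractionRing O K]
    {u : Submodule O (Fin N → K)} {U : Submodule K (Fin N → K)} {s : Set (Fin N → K)}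
    (hs : s.Finite) (hU : U.restrictScalars O ≤ u) (hu : u = U.restrictScalars O ⊔ span O s)
    (htop : span K (u : Set (Fin N → K)) = ⊤) : IsSemiLattice O u := by
  obtain ⟨r, a, hli, heq⟩ := exists_linearIndependent_mkQ_sup_span_eq (O := O) U hs
  refine ⟨U, r, a, hU, hu.trans heq.symm, hli, ?_⟩
  rwa [hu, ← heq, span_restrictScalars_sup_span] at htop

end

/-- Let `K` be a valued field with valuation ring `O` and let `u` be an `O`-submodule of
`K^N` of the form `u = U₀ + O·a₁ + ⋯ + O·a_m` with `U₀ ⊆ u` a `K`-subspace. Then `u` is a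
semi-lattice if and only if every line `K·v` (for `v ≠ 0`) meets `u` nontrivially. -/
theorem isSemiLattice_iff_lines_meet {K : Type*} [Field K] (O : Type*) [CommRing O]
    [IsDomain O] [ValuationRing O] [Algebra O K] [IsFractionRing O K]
    {N : ℕ} (u : Submodule O (Fin N → K)) (U₀ : Submodule K (Fin N → K))
    {m : ℕ} (a : Fin m → (Fin N → K))
    (hU₀ : U₀.restrictScalars O ≤ u)
    (hu : u = U₀.restrictScalars O ⊔ Submodule.span O (Set.range a)) :
    IsSemiLattice O u ↔ ∀ v : Fin N → K, v ≠ 0 → ∃ c : K, c ≠ 0 ∧ c • v ∈ u := by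
  rw [← span_eq_top_iff_forall_exists_smul_mem (K := K)]
  exact ⟨IsSemiLattice.span_eq_top, isSemiLattice_of_span_eq_top (Set.finite_range a) hU₀ hu⟩
end

section
/- Let K be an algebraically closed valued field with valuation ring O, maximal ideal M, residue field k, and residue map res : O → k. Let F ∈ O[X] be a polynomial whose reduction f ∈ k[X] (obtained by applying res to the coefficients) is nonzero. Then for every root α of f in k, there exists a ∈ O with F(a) = 0 and res(a) = α. In other words, res maps the set of roots of F lying in O onto the set of roots of f in k. -/
/-!
Translate so that the root to be lifted is `0`: it suffices that `G ∈ O[X]` with nonzero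
reduction and `G(0) ∈ M` has a root in `M`. If it had none, every root `r ∈ K` of `G` would satisfy
`v(r) ≥ 1`, so `r⁻¹ ∈ O`, and the factorisation `G = G(0) · ∏ (1 - r⁻¹ X)` over the algebraically
closed field `K` would show that all coefficients of `G` lie in `G(0) · O ⊆ M`, i.e. that the
reduction of `G` vanishes.
-/

open Polynomial IsLocalRing

theorem Polynomial.Splits.eq_C_eval_zero_mul_prod_one_sub {K : Type*} [Field K] {p : K[X]}
    (hp : p.Splits) (h0 : p.eval 0 ≠ 0) :
    p = C (p.eval 0) * (p.roots.map fun r => 1 - C r⁻¹ * X).prod := by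
  have factor : ∀ r ∈ p.roots, X - C r = C (0 - r) * (1 - C r⁻¹ * X) := by
    intro r hr
    have hr0 : r ≠ 0 := by rintro rfl; exact h0 (isRoot_of_mem_roots hr)
    rw [mul_sub, ← mul_assoc, ← C_mul, zero_sub, neg_mul, mul_inv_cancel₀ hr0]
    simp only [map_neg, map_one]
    ring
  conv_lhs => rw [hp.eq_prod_roots, Multiset.map_congr rfl factor]
  rw [hp.eval_eq_prod_roots, Multiset.prod_map_mul, C_mul, map_multiset_prod, Multiset.map_map,
    mul_assoc]
  rfl

theorem Polynomial.Splits.exists_eq_C_eval_zero_mul_map {K : Type*} [Field K] (O : Subring K)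
    {p : K[X]} (hp : p.Splits) (h0 : p.eval 0 ≠ 0) (hinv : ∀ r ∈ p.roots, r⁻¹ ∈ O) :
    ∃ q : O[X], p = C (p.eval 0) * q.map O.subtype := by
  suffices (p.roots.map fun r => 1 - C r⁻¹ * X).prod ∈ liftsRing O.subtype by
    obtain ⟨q, hq⟩ := (lifts_iff_liftsRing _ _).mpr this
    rw [coe_mapRingHom] at hq
    exact ⟨q, hq ▸ hp.eq_C_eval_zero_mul_prod_one_sub h0⟩
  refine Subring.multiset_prod_mem _ _ fun f hf => ?_
  obtain ⟨r, hr, rfl⟩ := Multiset.mem_map.mp hf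
  have hC : C r⁻¹ ∈ liftsRing O.subtype :=
    (lifts_iff_liftsRing _ _).mp (C_mem_lifts O.subtype ⟨r⁻¹, hinv r hr⟩)
  have hX : (X : K[X]) ∈ liftsRing O.subtype := (lifts_iff_liftsRing _ _).mp (X_mem_lifts _)
  exact sub_mem (one_mem _) (mul_mem hC hX)

theorem ValuationSubring.exists_isRoot_mem_maximalIdeal {K : Type*} [Field K] [IsAlgClosed K]
    (O : ValuationSubring K) {G : O[X]} (hG : G.map (residue O) ≠ 0)
    (h0 : G.coeff 0 ∈ maximalIdeal O) :
    ∃ b ∈ maximalIdeal O, G.IsRoot b := by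
  by_contra! hcon
  set ι := O.subtype
  have heval : ∀ x : O, (G.map ι).eval (ι x) = ι (G.eval x) := fun x => eval_map_apply ι x
  -- A root `r` with `v(r) < 1` would be a root of `G` lying in `M`.
  have hinv : ∀ r ∈ (G.map ι).roots, r⁻¹ ∈ O := by
    intro r hr
    refine O.mem_of_valuation_le_one _ (map_inv₀ O.valuation r ▸ inv_le_one_of_one_le₀ ?_)
    by_contra! hlt
    have hrO : r ∈ O := O.mem_of_valuation_le_one r hlt.le
    refine hcon ⟨r, hrO⟩ ((O.valuation_lt_one_iff _).mpr hlt) (Subtype.coe_injective ?_)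
    exact (heval ⟨r, hrO⟩).symm.trans (isRoot_of_mem_roots hr)
  have hG0 : (G.map ι).eval 0 = ι (G.coeff 0) := by
    rw [← map_zero ι, heval, ← coeff_zero_eq_eval_zero]
  have hc0 : G.coeff 0 ≠ 0 := fun h =>
    hcon 0 (maximalIdeal O).zero_mem (by rwa [IsRoot, ← coeff_zero_eq_eval_zero])
  have hne : (G.map ι).eval 0 ≠ 0 := hG0 ▸ (map_ne_zero_iff ι Subtype.coe_injective).mpr hc0
  obtain ⟨q, hq⟩ :=
    (IsAlgClosed.splits (G.map ι)).exists_eq_C_eval_zero_mul_map O.toSubring hne hinv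
  have hGq : G = C (G.coeff 0) * q := by
    refine map_injective ι Subtype.coe_injective ?_
    rw [Polynomial.map_mul, map_C, ← hG0]
    exact hq
  apply hG
  rw [hGq, Polynomial.map_mul, map_C, (residue_eq_zero_iff _).mpr h0, C_0, zero_mul]

/-- Let `K` be an algebraically closed valued field with valuation ring `O`, residue field
`k = O/M` and residue map `res : O → k`. Let `F ∈ O[X]` be a polynomial whose reduction
`f ∈ k[X]` is nonzero. Then every root `α` of `f` in `k` lifts to a root `a ∈ O` of `F` with
`res a = α`; in other words `res` maps the roots of `F` in `O` onto the roots of `f` in `k`. -/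
theorem residue_maps_roots_onto_roots {K : Type*} [Field K] [IsAlgClosed K]
    (O : ValuationSubring K) (F : Polynomial O)
    (hF : F.map (IsLocalRing.residue O) ≠ 0)
    (α : IsLocalRing.ResidueField O)
    (hα : (F.map (IsLocalRing.residue O)).eval α = 0) :
    ∃ a : O, F.eval a = 0 ∧ IsLocalRing.residue O a = α := by
  obtain ⟨a₀, rfl⟩ := residue_surjective α
  have hmap : (F.comp (X + C a₀)).map (residue O) =
      (F.map (residue O)).comp (X + C (residue O a₀)) := by
    rw [Polynomial.map_comp, Polynomial.map_add, map_X, map_C]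
  have hG : (F.comp (X + C a₀)).map (residue O) ≠ 0 := by
    rwa [hmap, comp_X_add_C_ne_zero_iff]
  have h0 : (F.comp (X + C a₀)).coeff 0 ∈ maximalIdeal O := by
    rw [← residue_eq_zero_iff, ← coeff_map, hmap, coeff_zero_eq_eval_zero, eval_comp]
    simpa using hα
  obtain ⟨b, hb, hroot⟩ := O.exists_isRoot_mem_maximalIdeal hG h0
  refine ⟨b + a₀, by simpa [IsRoot, eval_comp] using hroot, ?_⟩
  rw [map_add, (residue_eq_zero_iff b).mpr hb, zero_add]
end
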